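/- For the Lagrangian L = ½θ̇² + q ẋ θ̇ + ½ẋ² + ln(e^{−θ}φ̇) on T(G × ℝ) (G the affine group of the line, q a constant), the Hessian with respect to the frame {Ẽ₁, Ẽ₂, X = ∂/∂x} is the matrix [[1 − φ²/φ̇², −φ/φ̇², q], [−φ/φ̇², −1/φ̇², 0], [q, 0, 1]], whose determinant equals (q² − 1)/φ̇². Hence L is regular (on the region φ̇ > 0) if and only if q² ≠ 1, and the upper-left 2×2 block (g_{ab}) has determinant −1/φ̇², hence is always invertible there, with inverse [[1, −φ], [−φ, φ² − φ̇²]]. -/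

import Mathlib

open scoped BigOperators

/-- The fibre Hessian of a Lagrangian `L` at `p ∈ TM`, evaluated on two tangent
vectors: `g(v,w) = v^V(w^V(L))`. -/
noncomputable def fiberHess {E : Type*} [NormedAddCommGroup E] [NormedSpace ℝ E]
    (L : E × E → ℝ) (p : E × E) (v w : E) : ℝ :=
  fderiv ℝ (fun u => fderiv ℝ (fun u' => L (p.1, u')) u w) p.2 v

/-- The Lagrangian `L = ½θ̇² + qẋθ̇ + ½ẋ² + ln(e^{−θ}φ̇)` on `T(G×ℝ)`;
coordinates: `x 0 = θ`, `x 1 = φ`, `x 2 = x` and correspondingly for the fibre. -/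
noncomputable def Laff (q : ℝ) : (Fin 3 → ℝ) × (Fin 3 → ℝ) → ℝ :=
  fun p => (1/2) * (p.2 0)^2 + q * p.2 2 * p.2 0 + (1/2) * (p.2 2)^2
    + Real.log (Real.exp (-(p.1 0)) * p.2 1)

/-!
In the fibre coordinates `u = (θ̇, φ̇, ẋ)` the fibre differential of `L` is
`(θ̇ + qẋ) dθ̇ + φ̇⁻¹ dφ̇ + (qθ̇ + ẋ) dẋ`, since `ln(e^{−θ}φ̇) = −θ + ln φ̇` contributes only
through `φ̇`. Differentiating once more gives the fibre Hessian
`g(v, w) = (v₀ + qv₂)w₀ − v₁w₁/φ̇² + (qv₀ + v₂)w₂`, and evaluating it on the frame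
`Ẽ₁ = (1, φ, 0)`, `Ẽ₂ = (0, 1, 0)`, `X = (0, 0, 1)` yields the matrix.
-/

open ContinuousLinearMap

section FiberDerivative

variable (q : ℝ) (x : Fin 3 → ℝ)

lemma hasFDerivAt_Laff_fiber {u : Fin 3 → ℝ} (hu : 0 < u 1) :
    HasFDerivAt (fun u' => Laff q (x, u'))
      ((u 0 + q * u 2) • proj 0 + (u 1)⁻¹ • proj 1 + (q * u 0 + u 2) • proj 2 :
        (Fin 3 → ℝ) →L[ℝ] ℝ) u := by
  have h0 := hasFDerivAt_apply (𝕜 := ℝ) (0 : Fin 3) u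
  have h1 := hasFDerivAt_apply (𝕜 := ℝ) (1 : Fin 3) u
  have h2 := hasFDerivAt_apply (𝕜 := ℝ) (2 : Fin 3) u
  have hlog := (Real.hasDerivAt_log (by positivity : Real.exp (-x 0) * u 1 ≠ 0)).comp_hasFDerivAt
    u (h1.const_mul (Real.exp (-x 0)))
  have hsum := ((((h0.mul h0).const_mul ((1:ℝ)/2)).add ((h2.const_mul q).mul h0)).add
      ((h2.mul h2).const_mul ((1:ℝ)/2))).add hlog
  simp only [Laff, pow_two]
  refine hsum.congr_fderiv ?_
  ext w
  simp only [add_apply, smul_apply, proj_apply, smul_eq_mul]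
  field_simp
  ring

lemma fderiv_Laff_fiber_apply {u : Fin 3 → ℝ} (hu : 0 < u 1) (w : Fin 3 → ℝ) :
    fderiv ℝ (fun u' => Laff q (x, u')) u w
      = (u 0 + q * u 2) * w 0 + (u 1)⁻¹ * w 1 + (q * u 0 + u 2) * w 2 := by
  rw [(hasFDerivAt_Laff_fiber q x hu).fderiv]
  simp

end FiberDerivative

lemma fiberHess_Laff (q : ℝ) {p : (Fin 3 → ℝ) × (Fin 3 → ℝ)} (hp : 0 < p.2 1)
    (v w : Fin 3 → ℝ) :
    fiberHess (Laff q) p v w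
      = (v 0 + q * v 2) * w 0 - v 1 * w 1 / (p.2 1)^2 + (q * v 0 + v 2) * w 2 := by
  have h0 := hasFDerivAt_apply (𝕜 := ℝ) (0 : Fin 3) p.2
  have h1 := hasFDerivAt_apply (𝕜 := ℝ) (1 : Fin 3) p.2
  have h2 := hasFDerivAt_apply (𝕜 := ℝ) (2 : Fin 3) p.2
  have hinv := (hasDerivAt_inv hp.ne').comp_hasFDerivAt p.2 h1
  have hdiff := (((h0.add (h2.const_mul q)).mul_const (w 0)).add (hinv.mul_const (w 1))).add
    (((h0.const_mul q).add h2).mul_const (w 2))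
  have hnear : (fun u => fderiv ℝ (fun u' => Laff q (p.1, u')) u w)
      =ᶠ[nhds p.2] fun u : Fin 3 → ℝ =>
        (u 0 + q * u 2) * w 0 + (u 1)⁻¹ * w 1 + (q * u 0 + u 2) * w 2 := by
    filter_upwards [(isOpen_lt continuous_const (continuous_apply 1)).mem_nhds hp] with u hu
    exact fderiv_Laff_fiber_apply q p.1 hu w
  rw [fiberHess, hnear.fderiv_eq, HasFDerivAt.fderiv (f := fun u : Fin 3 → ℝ =>
    (u 0 + q * u 2) * w 0 + (u 1)⁻¹ * w 1 + (q * u 0 + u 2) * w 2) hdiff]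
  simp only [add_apply, smul_apply, proj_apply, smul_eq_mul]
  field_simp
  ring

lemma hessianMatrix_Laff (q : ℝ) {p : (Fin 3 → ℝ) × (Fin 3 → ℝ)} (hp : 0 < p.2 1) :
    Matrix.of (fun a b : Fin 3 => fiberHess (Laff q) p
        (![![1, p.1 1, 0], ![0, 1, 0], ![0, 0, 1]] a)
        (![![1, p.1 1, 0], ![0, 1, 0], ![0, 0, 1]] b))
      = !![1 - (p.1 1)^2/(p.2 1)^2, -(p.1 1)/(p.2 1)^2, q;
           -(p.1 1)/(p.2 1)^2, -1/(p.2 1)^2, 0;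
           q, 0, 1] := by
  ext a b
  fin_cases a <;> fin_cases b <;>
    simp only [Matrix.of_apply, Matrix.cons_val', Matrix.cons_val_zero, Matrix.cons_val_one,
      Matrix.cons_val_fin_one, Matrix.cons_val, Fin.zero_eta, Fin.mk_one, Fin.reduceFinMk,
      Fin.isValue, fiberHess_Laff q hp] <;> ring

section Determinants

variable {K : Type*} [Field K] (q φ φ' : K)

lemma det_affineHessian (hφ' : φ' ≠ 0) :
    (!![1 - φ^2/φ'^2, -φ/φ'^2, q; -φ/φ'^2, -1/φ'^2, 0; q, 0, 1] : Matrix (Fin 3) (Fin 3) K).det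
      = (q^2 - 1)/φ'^2 := by
  simp only [Matrix.det_fin_three, Matrix.of_apply, Matrix.cons_val', Matrix.cons_val_zero,
    Matrix.cons_val_one, Matrix.cons_val_fin_one, Matrix.cons_val, Fin.isValue]
  field_simp
  ring

lemma det_affineHessian_ne_zero_iff (hφ' : φ' ≠ 0) :
    (!![1 - φ^2/φ'^2, -φ/φ'^2, q; -φ/φ'^2, -1/φ'^2, 0; q, 0, 1] :
      Matrix (Fin 3) (Fin 3) K).det ≠ 0 ↔ q^2 ≠ 1 := by
  rw [det_affineHessian q φ φ' hφ', div_ne_zero_iff, sub_ne_zero]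
  exact and_iff_left (pow_ne_zero 2 hφ')

lemma det_affineHessianBlock (hφ' : φ' ≠ 0) :
    (!![1 - φ^2/φ'^2, -φ/φ'^2; -φ/φ'^2, -1/φ'^2] : Matrix (Fin 2) (Fin 2) K).det
      = -1/φ'^2 := by
  rw [Matrix.det_fin_two_of]
  field_simp
  ring

lemma affineHessianBlock_inv_mul (hφ' : φ' ≠ 0) :
    !![1, -φ; -φ, φ^2 - φ'^2] * !![1 - φ^2/φ'^2, -φ/φ'^2; -φ/φ'^2, -1/φ'^2] = 1 := by
  rw [Matrix.mul_fin_two, Matrix.one_fin_two]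
  ext i j
  fin_cases i <;> fin_cases j <;>
    simp only [Matrix.of_apply, Matrix.cons_val', Matrix.cons_val_zero, Matrix.cons_val_one,
      Matrix.cons_val_fin_one, Fin.zero_eta, Fin.mk_one, Fin.isValue] <;>
    field_simp <;> ring

end Determinants

/-- The Hessian of `L = ½θ̇² + qẋθ̇ + ½ẋ² + ln(e^{−θ}φ̇)` in the frame
`{Ẽ₁, Ẽ₂, X}` is `[[1−φ²/φ̇², −φ/φ̇², q],[−φ/φ̇², −1/φ̇², 0],[q, 0, 1]]` with
determinant `(q²−1)/φ̇²`; so (on `φ̇ > 0`) `L` is regular iff `q² ≠ 1`, and the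
upper-left 2×2 block has determinant `−1/φ̇²` and inverse `[[1, −φ],[−φ, φ²−φ̇²]]`. -/
theorem affine_lagrangian_hessian (q : ℝ) :
    let frame : Fin 3 → (Fin 3 → ℝ) → (Fin 3 → ℝ) :=
      fun a x => ![![1, x 1, 0], ![0, 1, 0], ![0, 0, 1]] a
    ∀ p : (Fin 3 → ℝ) × (Fin 3 → ℝ), 0 < p.2 1 →
      (Matrix.of (fun a b : Fin 3 => fiberHess (Laff q) p (frame a p.1) (frame b p.1))
        = !![1 - (p.1 1)^2/(p.2 1)^2, -(p.1 1)/(p.2 1)^2, q;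
             -(p.1 1)/(p.2 1)^2, -1/(p.2 1)^2, 0;
             q, 0, 1]) ∧
      (!![1 - (p.1 1)^2/(p.2 1)^2, -(p.1 1)/(p.2 1)^2, q;
          -(p.1 1)/(p.2 1)^2, -1/(p.2 1)^2, 0;
          q, 0, 1] : Matrix (Fin 3) (Fin 3) ℝ).det = (q^2 - 1)/(p.2 1)^2 ∧
      ((!![1 - (p.1 1)^2/(p.2 1)^2, -(p.1 1)/(p.2 1)^2, q;
           -(p.1 1)/(p.2 1)^2, -1/(p.2 1)^2, 0;
           q, 0, 1] : Matrix (Fin 3) (Fin 3) ℝ).det ≠ 0 ↔ q^2 ≠ 1) ∧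
      (!![1 - (p.1 1)^2/(p.2 1)^2, -(p.1 1)/(p.2 1)^2;
          -(p.1 1)/(p.2 1)^2, -1/(p.2 1)^2] : Matrix (Fin 2) (Fin 2) ℝ).det
        = -1/(p.2 1)^2 ∧
      (!![(1 : ℝ), -(p.1 1); -(p.1 1), (p.1 1)^2 - (p.2 1)^2] *
        !![1 - (p.1 1)^2/(p.2 1)^2, -(p.1 1)/(p.2 1)^2;
           -(p.1 1)/(p.2 1)^2, -1/(p.2 1)^2]) = 1 := by
  intro frame p hp
  have hφ' : p.2 1 ≠ 0 := hp.ne'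
  exact ⟨hessianMatrix_Laff q hp, det_affineHessian q _ _ hφ',
    det_affineHessian_ne_zero_iff q _ _ hφ', det_affineHessianBlock _ _ hφ',
    affineHessianBlock_inv_mul _ _ hφ'⟩
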